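/- Let U ⊆ A^{ℤ²} be a block gluing additive shift space with h_r(U) < ĥ^{(1)}(U). If the supremum ĥ^{(1)}(U) is attained by some one-dimensional sublattice L', then there exists an expanding system Ω = {Ω(n)}_{n≥1} of finite subsets of ℤ² such that h_Ω(U) = ĥ^{(1)}(U) = h_{L'}(U). -/

import Mathlib

open Filter
open scoped Classical

/-- The `m × n` rectangular lattice `Z_{m×n}(p)` with bottom-left corner `p`. -/
def Zrect (m n : ℕ) (p : ℤ × ℤ) : Finset (ℤ × ℤ) :=
  (Finset.range m ×ˢ Finset.range n).image (fun ab => (p.1 + (ab.1 : ℤ), p.2 + (ab.2 : ℤ)))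

/-- The number of patterns of `U` seen on the finite window `L`. -/
noncomputable def patternCount {A : Type*} (U : Set ((ℤ × ℤ) → A)) (L : Finset (ℤ × ℤ)) : ℕ :=
  Set.ncard ((fun x => fun p : L => x (p : ℤ × ℤ)) '' U)

/-- An additive shift space: nonempty, closed, translation invariant. -/
def IsShiftSpace {A : Type*} [TopologicalSpace A] (U : Set ((ℤ × ℤ) → A)) : Prop :=
  U.Nonempty ∧ IsClosed U ∧ ∀ v : ℤ × ℤ, ∀ x ∈ U, (fun p => x (p + v)) ∈ U

/-- An expanding system of finite sublattices of `ℤ²`. -/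
def IsExpandingSystem (Ω : ℕ → Finset (ℤ × ℤ)) : Prop :=
  (∀ n, Ω n ⊂ Ω (n + 1)) ∧ ∀ p : ℤ × ℤ, ∃ n, p ∈ Ω n

/-- The interior of a finite lattice. -/
def latInterior (L : Finset (ℤ × ℤ)) : Finset (ℤ × ℤ) :=
  L.filter (fun p => (p.1 + 1, p.2) ∈ L ∧ (p.1, p.2 + 1) ∈ L ∧ (p.1 + 1, p.2 + 1) ∈ L)

/-- The boundary of a finite lattice. -/
def latBoundary (L : Finset (ℤ × ℤ)) : Finset (ℤ × ℤ) := L \ latInterior L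

/-- The rectangular entropy `h_r(U)`. -/
noncomputable def rectEntropy {A : Type*} (U : Set ((ℤ × ℤ) → A)) : ℝ :=
  ⨅ mn : ℕ × ℕ, (1 / (((mn.1 + 1) * (mn.2 + 1) : ℕ) : ℝ)) *
    Real.log (patternCount U (Zrect (mn.1 + 1) (mn.2 + 1) (0, 0)))

/-- The entropy `h_Ω(U)` along an expanding system `Ω`. -/
noncomputable def entropyAlong {A : Type*} (U : Set ((ℤ × ℤ) → A)) (Ω : ℕ → Finset (ℤ × ℤ)) : ℝ :=
  Filter.limsup (fun n => (1 / ((Ω n).card : ℝ)) * Real.log (patternCount U (Ω n))) Filter.atTop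

/-- `Ω_{k,l}(n)`: the union of grid rectangles `Z_{k×l}((ak,bl))` contained in `L`. -/
noncomputable def gridPart (k l : ℕ) (L : Finset (ℤ × ℤ)) : Finset (ℤ × ℤ) :=
  L.filter (fun p => ∃ a b : ℤ,
    p ∈ Zrect k l ((k : ℤ) * a, (l : ℤ) * b) ∧ Zrect k l ((k : ℤ) * a, (l : ℤ) * b) ⊆ L)

/-- `β_{k,l}` : the size of the complement of the grid part. -/
noncomputable def betaKL (k l : ℕ) (L : Finset (ℤ × ℤ)) : ℕ := (L \ gridPart k l L).card

/-- `α_{k,l}` : the number of grid rectangles contained in `L`. -/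
noncomputable def alphaKL (k l : ℕ) (L : Finset (ℤ × ℤ)) : ℕ :=
  Set.ncard {ab : ℤ × ℤ | Zrect k l ((k : ℤ) * ab.1, (l : ℤ) * ab.2) ⊆ L}

/-- A tessellation of `ℤ²`. -/
def IsTessellation (T : Finset (ℤ × ℤ)) : Prop :=
  ∃ v : ℕ → ℤ × ℤ,
    (∀ i j : ℕ, i ≠ j → Disjoint (T.image (· + v i)) (T.image (· + v j))) ∧
    ∀ p : ℤ × ℤ, ∃ i : ℕ, p ∈ T.image (· + v i)

/-- Euclidean distance between points of `ℤ²`. -/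
noncomputable def euclDist (p q : ℤ × ℤ) : ℝ :=
  Real.sqrt (((p.1 - q.1 : ℤ) : ℝ) ^ 2 + ((p.2 - q.2 : ℤ) : ℝ) ^ 2)

/-- Block gluing with gap `M`. -/
def BlockGluingWithGap {A : Type*} (U : Set ((ℤ × ℤ) → A)) (M : ℕ) : Prop :=
  ∀ (m₁ n₁ m₂ n₂ : ℕ) (c₁ c₂ : ℤ × ℤ),
    (∀ p ∈ Zrect m₁ n₁ c₁, ∀ q ∈ Zrect m₂ n₂ c₂, (M : ℝ) ≤ euclDist p q) →
    ∀ x₁ ∈ U, ∀ x₂ ∈ U, ∃ x ∈ U,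
      (∀ p ∈ Zrect m₁ n₁ c₁, x p = x₁ p) ∧ ∀ q ∈ Zrect m₂ n₂ c₂, x q = x₂ q

/-- Block gluing. -/
def IsBlockGluing {A : Type*} (U : Set ((ℤ × ℤ) → A)) : Prop :=
  ∃ M : ℕ, 1 ≤ M ∧ BlockGluingWithGap U M

/-- A full shift on a sub-alphabet. -/
def IsFullShift {A : Type*} (U : Set ((ℤ × ℤ) → A)) : Prop :=
  ∃ B : Set A, U = {x | ∀ p : ℤ × ℤ, x p ∈ B}

/-- Shift of finite type. -/
def IsSFT {A : Type*} (U : Set ((ℤ × ℤ) → A)) : Prop :=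
  ∃ (F : Finset (ℤ × ℤ)) (P : Set (F → A)),
    U = {x | ∀ v : ℤ × ℤ, (fun p : F => x (v + (p : ℤ × ℤ))) ∈ P}

/-- `(i,j)` has horizontal length `m` in `L`. -/
def HasHorizLength (L : Finset (ℤ × ℤ)) (p : ℤ × ℤ) (m : ℕ) : Prop :=
  1 ≤ m ∧ (∃ c : ℤ × ℤ, p ∈ Zrect m 1 c ∧ Zrect m 1 c ⊆ L) ∧
    ∀ m' : ℕ, m < m' → ¬ ∃ c : ℤ × ℤ, p ∈ Zrect m' 1 c ∧ Zrect m' 1 c ⊆ L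

/-- `(i,j)` has vertical length `m` in `L`. -/
def HasVertLength (L : Finset (ℤ × ℤ)) (p : ℤ × ℤ) (m : ℕ) : Prop :=
  1 ≤ m ∧ (∃ c : ℤ × ℤ, p ∈ Zrect 1 m c ∧ Zrect 1 m c ⊆ L) ∧
    ∀ m' : ℕ, m < m' → ¬ ∃ c : ℤ × ℤ, p ∈ Zrect 1 m' c ∧ Zrect 1 m' c ⊆ L

noncomputable def betaHoriz (m : ℕ) (L : Finset (ℤ × ℤ)) : ℕ :=
  (L.filter (fun p => HasHorizLength L p m)).card

noncomputable def betaVert (m : ℕ) (L : Finset (ℤ × ℤ)) : ℕ :=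
  (L.filter (fun p => HasVertLength L p m)).card

/-- The one-dimensional sublattice segment `{s • v : 0 ≤ s ≤ n-1}`. -/
def lineSegment (v : ℤ × ℤ) (n : ℕ) : Finset (ℤ × ℤ) :=
  (Finset.range n).image (fun s : ℕ => ((s : ℤ) * v.1, (s : ℤ) * v.2))

/-- The projectional entropy along the one-dimensional sublattice generated by `v`. -/
noncomputable def projEntropy {A : Type*} (U : Set ((ℤ × ℤ) → A)) (v : ℤ × ℤ) : ℝ :=
  ⨅ n : ℕ, (1 / (n + 1 : ℝ)) * Real.log (patternCount U (lineSegment v (n + 1)))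

/-- `ĥ⁽¹⁾(U)`: supremum of projectional entropies over one-dimensional sublattices. -/
noncomputable def hHatOne {A : Type*} (U : Set ((ℤ × ℤ) → A)) : ℝ :=
  ⨆ v : {w : ℤ × ℤ // w ≠ 0}, projEntropy U (v : ℤ × ℤ)

/-- The horizontal golden-mean shift. -/
def goldenMeanShift : Set ((ℤ × ℤ) → Fin 2) :=
  {x | ∀ p : ℤ × ℤ, x p * x (p.1 + 1, p.2) = 0}

/-- The sequence `a_k`: `a_1 = 2`, `a_2 = 3`, `a_k = a_{k-1} + a_{k-2}`. -/
def aSeq : ℕ → ℕ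
  | 0 => 1
  | 1 => 2
  | (k + 2) => aSeq (k + 1) + aSeq k



/-!
A line segment of length `N` in direction `v` carries about `exp (N · h_v)` patterns, where
`h_v` is the projectional entropy along `v` (Fekete's lemma, since pattern counts along a line
are submultiplicative by translation invariance). Adjoining to it the square `[-n, n]²` makes the
windows exhaust `ℤ²`, and changes the entropy density by at most `log |A| · (2n+1)² / N`, which
tends to `0` for `N = (2n+1)³`.
-/

open Topology

section PatternCount

variable {A : Type*} {U : Set ((ℤ × ℤ) → A)}

lemma patternCount_pos [Finite A] (hU : U.Nonempty) (L : Finset (ℤ × ℤ)) :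
    0 < patternCount U L :=
  (Set.ncard_pos).2 (hU.image _)

lemma patternCount_mono [Finite A] {L L' : Finset (ℤ × ℤ)} (h : L ⊆ L') :
    patternCount U L ≤ patternCount U L' := by
  have himage : (fun x : (ℤ × ℤ) → A => fun p : L => x p) '' U =
      (fun g : L' → A => fun p : L => g ⟨p, h p.2⟩) '' ((fun x => fun p : L' => x p) '' U) := by
    rw [← Set.image_comp]; rfl
  rw [patternCount, himage]
  exact Set.ncard_image_le (Set.toFinite _)

lemma patternCount_le_card_pow [Fintype A] (L : Finset (ℤ × ℤ)) :
    patternCount U L ≤ Fintype.card A ^ L.card := by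
  calc patternCount U L ≤ (Set.univ : Set (L → A)).ncard :=
        Set.ncard_le_ncard (Set.subset_univ _)
    _ = Fintype.card A ^ L.card := by simp [Set.ncard_univ, Nat.card_eq_fintype_card]

lemma patternCount_union_le [Finite A] (L L' : Finset (ℤ × ℤ)) :
    patternCount U (L ∪ L') ≤ patternCount U L * patternCount U L' := by
  let split : ((L ∪ L' : Finset (ℤ × ℤ)) → A) → (L → A) × (L' → A) := fun g =>
    (fun p => g ⟨p, Finset.mem_union_left _ p.2⟩, fun p => g ⟨p, Finset.mem_union_right _ p.2⟩)
  have hsplit : Function.Injective split := by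
    intro g g' hgg'
    funext q
    rcases Finset.mem_union.1 q.2 with h | h
    · exact congrFun (congrArg Prod.fst hgg') ⟨q, h⟩
    · exact congrFun (congrArg Prod.snd hgg') ⟨q, h⟩
  have hsub : split '' ((fun x => fun p : (L ∪ L' : Finset (ℤ × ℤ)) => x p) '' U) ⊆
      ((fun x => fun p : L => x p) '' U) ×ˢ ((fun x => fun p : L' => x p) '' U) := by
    rintro _ ⟨_, ⟨x, hx, rfl⟩, rfl⟩
    exact ⟨⟨x, hx, rfl⟩, ⟨x, hx, rfl⟩⟩
  rw [patternCount, ← Set.ncard_image_of_injective _ hsplit, patternCount, patternCount,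
    ← Set.ncard_prod]
  exact Set.ncard_le_ncard hsub (Set.toFinite _)

lemma patternCount_image_add (hshift : ∀ w : ℤ × ℤ, ∀ x ∈ U, (fun p => x (p + w)) ∈ U)
    (L : Finset (ℤ × ℤ)) (w : ℤ × ℤ) :
    patternCount U (L.image (· + w)) = patternCount U L := by
  let pullback : (L.image (· + w) → A) → (L → A) :=
    fun f p => f ⟨p + w, Finset.mem_image_of_mem _ p.2⟩
  have hpullback : Function.Injective pullback := by
    intro f g hfg
    funext ⟨q, hq⟩
    obtain ⟨p, hp, rfl⟩ := Finset.mem_image.1 hq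
    exact congrFun hfg ⟨p, hp⟩
  have himage : (fun x => fun p : L => x p) '' U =
      pullback '' ((fun x => fun p : L.image (· + w) => x p) '' U) := by
    ext f
    constructor
    · rintro ⟨x, hx, rfl⟩
      refine ⟨fun p => x (p + -w), ⟨_, hshift (-w) x hx, rfl⟩, ?_⟩
      funext p
      simp [pullback]
    · rintro ⟨_, ⟨x, hx, rfl⟩, rfl⟩
      exact ⟨fun q => x (q + w), hshift w x hx, rfl⟩
  rw [patternCount, patternCount, himage, Set.ncard_image_of_injective _ hpullback]

end PatternCount

noncomputable def windowEntropy {A : Type*} (U : Set ((ℤ × ℤ) → A)) (L : Finset (ℤ × ℤ)) : ℝ :=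
  1 / (L.card : ℝ) * Real.log (patternCount U L)

lemma abs_div_sub_div_le_of_bounds {a x l n b κ : ℝ} (hl : 0 < l) (ha : 0 ≤ a)
    (hal : a ≤ l * κ) (hax : a ≤ x) (hxa : x ≤ a + b * κ) (hln : l ≤ n) (hnl : n ≤ l + b) :
    |x / n - a / l| ≤ κ * b / l := by
  have hn : 0 < n := hl.trans_le hln
  rw [abs_sub_le_iff]
  constructor
  · calc x / n - a / l ≤ x / l - a / l := by
          gcongr
          linarith
      _ ≤ κ * b / l := by rw [← sub_div]; gcongr; linarith
  · rw [div_sub_div _ _ hl.ne' hn.ne', div_le_div_iff₀ (mul_pos hl hn) hl]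
    have hb : 0 ≤ b := by linarith
    have hκ : 0 ≤ κ := nonneg_of_mul_nonneg_right (ha.trans hal) hl
    have key : a * n - l * x ≤ κ * b * n := by
      nlinarith [mul_le_mul_of_nonneg_right hal hb, mul_le_mul_of_nonneg_left hax hl.le,
        mul_le_mul_of_nonneg_left (sub_le_iff_le_add'.2 hnl) ha,
        mul_le_mul_of_nonneg_left hln (mul_nonneg hκ hb)]
    nlinarith [mul_le_mul_of_nonneg_right key hl.le]

section Perturbation

variable {A : Type*} [Fintype A] {U : Set ((ℤ × ℤ) → A)}

lemma abs_windowEntropy_union_sub_le (hU : U.Nonempty) {L : Finset (ℤ × ℤ)} (hL : L.Nonempty)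
    (B : Finset (ℤ × ℤ)) :
    |windowEntropy U (L ∪ B) - windowEntropy U L| ≤
      Real.log (Fintype.card A) * B.card / L.card := by
  have hlog : ∀ {m n : ℕ}, 0 < m → m ≤ n → Real.log m ≤ Real.log n := fun h1 h2 =>
    Real.log_le_log (by exact_mod_cast h1) (by exact_mod_cast h2)
  have hpos := patternCount_pos hU
  simp only [windowEntropy, one_div_mul_eq_div]
  refine abs_div_sub_div_le_of_bounds (by exact_mod_cast hL.card_pos)
    (Real.log_natCast_nonneg _) ?_ (hlog (hpos L) (patternCount_mono Finset.subset_union_left))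
    ?_ (by exact_mod_cast Finset.card_le_card Finset.subset_union_left)
    (by exact_mod_cast Finset.card_union_le L B)
  · calc Real.log (patternCount U L) ≤ Real.log ((Fintype.card A ^ L.card : ℕ) : ℝ) :=
          hlog (hpos L) (patternCount_le_card_pow L)
      _ = L.card * Real.log (Fintype.card A) := by push_cast; rw [Real.log_pow]
  · calc Real.log (patternCount U (L ∪ B))
        ≤ Real.log ((patternCount U L * Fintype.card A ^ B.card : ℕ) : ℝ) :=
          hlog (hpos _) ((patternCount_union_le L B).trans
            (Nat.mul_le_mul_left _ (patternCount_le_card_pow B)))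
      _ = Real.log (patternCount U L) + B.card * Real.log (Fintype.card A) := by
          have : Nonempty A := ⟨hU.some (0, 0)⟩
          push_cast
          rw [Real.log_mul (by exact_mod_cast (hpos L).ne') (by positivity), Real.log_pow]

lemma tendsto_windowEntropy_union (hU : U.Nonempty) {L B : ℕ → Finset (ℤ × ℤ)}
    (hL : ∀ n, (L n).Nonempty)
    (hB : Tendsto (fun n => ((B n).card : ℝ) / (L n).card) atTop (𝓝 0)) {h : ℝ}
    (hLh : Tendsto (fun n => windowEntropy U (L n)) atTop (𝓝 h)) :
    Tendsto (fun n => windowEntropy U (L n ∪ B n)) atTop (𝓝 h) := by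
  have hdiff : Tendsto (fun n => windowEntropy U (L n ∪ B n) - windowEntropy U (L n))
      atTop (𝓝 0) := by
    refine squeeze_zero_norm (fun n => ?_) (by simpa using hB.const_mul (Real.log (Fintype.card A)))
    rw [Real.norm_eq_abs, ← mul_div_assoc]
    exact abs_windowEntropy_union_sub_le hU (hL n) (B n)
  simpa using hLh.add hdiff

end Perturbation

lemma lineSegment_add (v : ℤ × ℤ) (a b : ℕ) :
    lineSegment v (a + b) =
      lineSegment v a ∪ (lineSegment v b).image (· + ((a : ℤ) * v.1, (a : ℤ) * v.2)) := by
  ext q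
  simp only [lineSegment, Finset.mem_union, Finset.mem_image, Finset.mem_range]
  constructor
  · rintro ⟨s, hs, rfl⟩
    rcases lt_or_ge s a with h | h
    · exact Or.inl ⟨s, h, rfl⟩
    · refine Or.inr ⟨_, ⟨s - a, by omega, rfl⟩, ?_⟩
      refine Prod.ext ?_ ?_ <;> simp only [Prod.fst_add, Prod.snd_add] <;> push_cast [h] <;> ring
  · rintro (⟨s, hs, rfl⟩ | ⟨_, ⟨t, ht, rfl⟩, rfl⟩)
    · exact ⟨s, by omega, rfl⟩
    · refine ⟨t + a, by omega, ?_⟩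
      refine Prod.ext ?_ ?_ <;> simp only [Prod.fst_add, Prod.snd_add] <;> push_cast <;> ring

lemma lineSegment_mono (v : ℤ × ℤ) {m n : ℕ} (h : m ≤ n) : lineSegment v m ⊆ lineSegment v n :=
  Finset.image_subset_image (Finset.range_subset_range.2 h)

lemma lineSegment_injective {v : ℤ × ℤ} (hv : v ≠ 0) :
    Function.Injective (fun s : ℕ => ((s : ℤ) * v.1, (s : ℤ) * v.2)) := by
  intro s t hst
  simp only [Prod.mk.injEq] at hst
  by_cases h : v.1 = 0
  · have h2 : v.2 ≠ 0 := fun h2 => hv (Prod.ext h h2)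
    exact_mod_cast mul_right_cancel₀ h2 hst.2
  · exact_mod_cast mul_right_cancel₀ h hst.1

lemma card_lineSegment {v : ℤ × ℤ} (hv : v ≠ 0) (n : ℕ) : (lineSegment v n).card = n := by
  rw [lineSegment, Finset.card_image_of_injective _ (lineSegment_injective hv), Finset.card_range]

section LineEntropy

variable {A : Type*} [Finite A] {U : Set ((ℤ × ℤ) → A)}

lemma subadditive_log_patternCount_lineSegment (hU : U.Nonempty)
    (hshift : ∀ w : ℤ × ℤ, ∀ x ∈ U, (fun p => x (p + w)) ∈ U) (v : ℤ × ℤ) :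
    Subadditive (fun n => Real.log (patternCount U (lineSegment v n))) := by
  intro a b
  have hcount : patternCount U (lineSegment v (a + b)) ≤
      patternCount U (lineSegment v a) * patternCount U (lineSegment v b) := by
    rw [lineSegment_add]
    exact (patternCount_union_le _ _).trans_eq (by rw [patternCount_image_add hshift])
  have hpos : ∀ L, (0 : ℝ) < patternCount U L := fun L => by
    exact_mod_cast patternCount_pos hU L
  rw [← Real.log_mul (hpos _).ne' (hpos _).ne']
  exact Real.log_le_log (hpos _) (by exact_mod_cast hcount)

/-- Fekete's lemma identifies the infimum defining `projEntropy` with a limit. -/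
lemma tendsto_log_patternCount_lineSegment_div (hU : U.Nonempty)
    (hshift : ∀ w : ℤ × ℤ, ∀ x ∈ U, (fun p => x (p + w)) ∈ U) (v : ℤ × ℤ) :
    Tendsto (fun n : ℕ => Real.log (patternCount U (lineSegment v n)) / n) atTop
      (𝓝 (projEntropy U v)) := by
  set u : ℕ → ℝ := fun n => Real.log (patternCount U (lineSegment v n))
  have hsub : Subadditive u := subadditive_log_patternCount_lineSegment hU hshift v
  have hbdd : BddBelow (Set.range fun n => u n / n) :=
    ⟨0, by rintro _ ⟨n, rfl⟩; exact div_nonneg (Real.log_natCast_nonneg _) n.cast_nonneg⟩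
  have hproj : projEntropy U v = ⨅ m : ℕ, u (m + 1) / (m + 1 : ℕ) := by
    simp only [projEntropy, u, one_div_mul_eq_div, Nat.cast_succ]
  have hshifted := (hsub.tendsto_lim hbdd).comp (tendsto_add_atTop_nat 1)
  suffices projEntropy U v = hsub.lim by rw [this]; exact hsub.tendsto_lim hbdd
  have hbdd' : BddBelow (Set.range fun m : ℕ => u (m + 1) / (m + 1 : ℕ)) :=
    hbdd.mono (Set.range_comp_subset_range (· + 1) fun n => u n / n)
  rw [hproj]
  exact le_antisymm (ge_of_tendsto' hshifted fun m => ciInf_le hbdd' m)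
    (le_ciInf fun m => hsub.lim_le_div hbdd m.succ_ne_zero)

end LineEntropy

lemma mem_Zrect {m n : ℕ} {p q : ℤ × ℤ} :
    q ∈ Zrect m n p ↔ p.1 ≤ q.1 ∧ q.1 < p.1 + m ∧ p.2 ≤ q.2 ∧ q.2 < p.2 + n := by
  obtain ⟨q1, q2⟩ := q
  simp only [Zrect, Finset.mem_image, Finset.mem_product, Finset.mem_range, Prod.mk.injEq]
  constructor
  · rintro ⟨⟨a, b⟩, ⟨ha, hb⟩, rfl, rfl⟩
    omega
  · rintro ⟨h1, h2, h3, h4⟩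
    exact ⟨((q1 - p.1).toNat, (q2 - p.2).toNat), ⟨by omega, by omega⟩, by omega, by omega⟩

lemma card_Zrect (m n : ℕ) (p : ℤ × ℤ) : (Zrect m n p).card = m * n := by
  rw [Zrect, Finset.card_image_of_injective, Finset.card_product, Finset.card_range,
    Finset.card_range]
  rintro ⟨a, b⟩ ⟨c, d⟩ h
  simp only [Prod.mk.injEq, add_right_inj, Nat.cast_inj] at h
  rw [h.1, h.2]

def centeredSquare (n : ℕ) : Finset (ℤ × ℤ) := Zrect (2 * n + 1) (2 * n + 1) (-n, -n)

lemma mem_centeredSquare {n : ℕ} {q : ℤ × ℤ} :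
    q ∈ centeredSquare n ↔ q.1.natAbs ≤ n ∧ q.2.natAbs ≤ n := by
  rw [centeredSquare, mem_Zrect]
  omega

lemma card_centeredSquare (n : ℕ) : (centeredSquare n).card = (2 * n + 1) ^ 2 := by
  rw [centeredSquare, card_Zrect, sq]

def lineSquareWindow (v : ℤ × ℤ) (n : ℕ) : Finset (ℤ × ℤ) :=
  lineSegment v ((2 * n + 1) ^ 3) ∪ centeredSquare n

lemma isExpandingSystem_lineSquareWindow {v : ℤ × ℤ} (hv : v ≠ 0) :
    IsExpandingSystem (lineSquareWindow v) := by
  refine ⟨fun n => ?_, fun p => ⟨p.1.natAbs + p.2.natAbs, Finset.mem_union_right _ ?_⟩⟩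
  · set N := (2 * n + 1) ^ 3
    have hN : n < N := (by omega : n < 2 * n + 1).trans_le (Nat.le_self_pow (by norm_num) _)
    have hsub : lineSquareWindow v n ⊆ lineSquareWindow v (n + 1) :=
      Finset.union_subset_union (lineSegment_mono v (Nat.pow_le_pow_left (by omega) 3))
        fun q hq => by rw [mem_centeredSquare] at hq ⊢; omega
    refine (Finset.ssubset_iff_of_subset hsub).2 ⟨((N : ℤ) * v.1, (N : ℤ) * v.2), ?_, ?_⟩
    · refine Finset.mem_union_left _ (Finset.mem_image_of_mem _ (Finset.mem_range.2 ?_))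
      exact Nat.pow_lt_pow_left (by omega) (by norm_num)
    · intro hmem
      rcases Finset.mem_union.1 hmem with hline | hsquare
      · obtain ⟨s, hs, hsN⟩ := Finset.mem_image.1 hline
        exact (Finset.mem_range.1 hs).ne (lineSegment_injective hv hsN)
      · rw [mem_centeredSquare, Int.natAbs_mul, Int.natAbs_mul, Int.natAbs_natCast] at hsquare
        by_cases h : v.1 = 0
        · have h2 : v.2.natAbs ≠ 0 := by simpa using fun h2 => hv (Prod.ext h h2)
          exact hsquare.2.not_gt (hN.trans_le (Nat.le_mul_of_pos_right _ (by omega)))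
        · have h1 : v.1.natAbs ≠ 0 := by simpa using h
          exact hsquare.1.not_gt (hN.trans_le (Nat.le_mul_of_pos_right _ (by omega)))
  · rw [mem_centeredSquare]
    omega

lemma tendsto_windowEntropy_lineSquareWindow {A : Type*} [Fintype A] {U : Set ((ℤ × ℤ) → A)}
    (hU : U.Nonempty) (hshift : ∀ w : ℤ × ℤ, ∀ x ∈ U, (fun p => x (p + w)) ∈ U)
    {v : ℤ × ℤ} (hv : v ≠ 0) :
    Tendsto (fun n => windowEntropy U (lineSquareWindow v n)) atTop (𝓝 (projEntropy U v)) := by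
  have hside : Tendsto (fun n : ℕ => 2 * n + 1) atTop atTop :=
    tendsto_atTop_mono (fun n => by simp only [id]; omega) tendsto_id
  have hlength : Tendsto (fun n : ℕ => (2 * n + 1) ^ 3) atTop atTop :=
    tendsto_atTop_mono (fun n => Nat.le_self_pow (by norm_num) _) hside
  refine tendsto_windowEntropy_union hU
    (fun n => (Finset.card_pos.1 (by rw [card_lineSegment hv]; positivity))) ?_ ?_
  · refine (tendsto_inv_atTop_zero.comp (tendsto_natCast_atTop_atTop.comp hside)).congr
      fun n => ?_
    simp only [Function.comp_apply, card_centeredSquare, card_lineSegment hv]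
    push_cast
    field_simp
  · refine ((tendsto_log_patternCount_lineSegment_div hU hshift v).comp hlength).congr
      fun n => ?_
    simp only [Function.comp_apply, windowEntropy, card_lineSegment hv, one_div_mul_eq_div]

theorem exists_expanding_system_entropyAlong_eq_hHatOne_general {A : Type*} [Fintype A]
    [TopologicalSpace A]
    (U : Set ((ℤ × ℤ) → A)) (hU : IsShiftSpace U)
    (v : ℤ × ℤ) (hv : v ≠ 0) (hattain : projEntropy U v = hHatOne U) :
    ∃ Ω : ℕ → Finset (ℤ × ℤ), IsExpandingSystem Ω ∧
      entropyAlong U Ω = hHatOne U ∧ hHatOne U = projEntropy U v := by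
  obtain ⟨hne, -, hshift⟩ := hU
  refine ⟨lineSquareWindow v, isExpandingSystem_lineSquareWindow hv, ?_, hattain.symm⟩
  rw [← hattain]
  exact (tendsto_windowEntropy_lineSquareWindow hne hshift hv).limsup_eq

/-- Theorem 1.4 / 4.2, second part: if `ĥ⁽¹⁾(U)` is attained by some
one-dimensional sublattice, then it is realized as `h_Ω(U)` for some expanding system. -/
theorem exists_expanding_system_entropyAlong_eq_hHatOne {A : Type*} [Fintype A]
    [TopologicalSpace A] [DiscreteTopology A] (hcard : 2 ≤ Fintype.card A)
    (U : Set ((ℤ × ℤ) → A)) (hU : IsShiftSpace U) (hbg : IsBlockGluing U)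
    (hlt : rectEntropy U < hHatOne U)
    (v : ℤ × ℤ) (hv : v ≠ 0) (hattain : projEntropy U v = hHatOne U) :
    ∃ Ω : ℕ → Finset (ℤ × ℤ), IsExpandingSystem Ω ∧
      entropyAlong U Ω = hHatOne U ∧ hHatOne U = projEntropy U v :=
  exists_expanding_system_entropyAlong_eq_hHatOne_general U hU v hv hattain
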